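/- arXiv:2511.04038 — 2 statements merged into one kernel-verified Lean document; each statement's English description precedes it below -/
import Mathlib

section
/- Let 𝔅 be a bornology on a topological space X with a closed base, and let Γ_𝔅^seq denote 𝔅-sequences. Then X satisfies S1(Γ_𝔅, Γ_𝔅^seq) if and only if X satisfies ⋂_∞(Γ_𝔅, Γ_𝔅^seq), i.e., for every sequence {𝒰ₙ} of γ_𝔅-covers there exist infinite 𝒲ₙ ⊆ 𝒰ₙ such that {⋂𝒲ₙ : n ∈ ω} is a 𝔅-sequence if and only if one can select single elements Uₙ ∈ 𝒰ₙ forming a 𝔅-sequence. -/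
open Set

universe u

def IsBornology {X : Type u} (B : Set (Set X)) : Prop :=
  ⋃₀ B = univ ∧ (∀ b ∈ B, ∀ b' ⊆ b, b' ∈ B) ∧ ∀ b ∈ B, ∀ b' ∈ B, b ∪ b' ∈ B

def HasClosedBase {X : Type u} [TopologicalSpace X] (B : Set (Set X)) : Prop :=
  ∃ B0 ⊆ B, (∀ b ∈ B0, IsClosed b) ∧ ∀ b ∈ B, ∃ b0 ∈ B0, b ⊆ b0

def HasCompactBase {X : Type u} [TopologicalSpace X] (B : Set (Set X)) : Prop :=
  ∃ B0 ⊆ B, (∀ b ∈ B0, IsCompact b) ∧ ∀ b ∈ B, ∃ b0 ∈ B0, b ⊆ b0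

def IsBCover {X : Type u} [TopologicalSpace X] (B U : Set (Set X)) : Prop :=
  (∀ u ∈ U, IsOpen u) ∧ univ ∉ U ∧ ∀ b ∈ B, ∃ u ∈ U, b ⊆ u

def IsGammaBCover {X : Type u} [TopologicalSpace X] (B U : Set (Set X)) : Prop :=
  U.Infinite ∧ (∀ u ∈ U, IsOpen u ∧ u ≠ univ) ∧ ∀ b ∈ B, {u ∈ U | ¬ b ⊆ u}.Finite

def IsOpenCover {X : Type u} [TopologicalSpace X] (U : Set (Set X)) : Prop :=
  (∀ u ∈ U, IsOpen u) ∧ ⋃₀ U = univ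

def IsOmegaCover {X : Type u} [TopologicalSpace X] (U : Set (Set X)) : Prop :=
  (∀ u ∈ U, IsOpen u) ∧ univ ∉ U ∧ ∀ F : Set X, F.Finite → ∃ u ∈ U, F ⊆ u

def IsGammaCover {X : Type u} [TopologicalSpace X] (U : Set (Set X)) : Prop :=
  U.Infinite ∧ (∀ u ∈ U, IsOpen u) ∧ ∀ x : X, {u ∈ U | x ∉ u}.Finite

def BLindelof {X : Type u} [TopologicalSpace X] (B : Set (Set X)) : Prop :=
  ∀ U, IsBCover B U → ∃ V ⊆ U, V.Countable ∧ IsBCover B V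

def S1 {X : Type u} (A C : Set (Set X) → Prop) : Prop :=
  ∀ U : ℕ → Set (Set X), (∀ n, A (U n)) →
    ∃ V : ℕ → Set X, (∀ n, V n ∈ U n) ∧ C (Set.range V)

def Sfin {X : Type u} (A C : Set (Set X) → Prop) : Prop :=
  ∀ U : ℕ → Set (Set X), (∀ n, A (U n)) →
    ∃ V : ℕ → Set (Set X), (∀ n, (V n).Finite ∧ V n ⊆ U n) ∧ C (⋃ n, V n)

def Ufin {X : Type u} (A C : Set (Set X) → Prop) : Prop :=
  ∀ U : ℕ → Set (Set X), (∀ n, A (U n)) →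
    ∃ V : ℕ → Set (Set X), (∀ n, (V n).Finite ∧ V n ⊆ U n) ∧
      ((∃ n, ⋃₀ V n = univ) ∨ C {s | ∃ n, s = ⋃₀ V n})
def IsBSeq {X : Type u} (B : Set (Set X)) (U : Set (Set X)) : Prop :=
  U.Infinite ∧ ⋃₀ U = univ ∧ ∀ b ∈ B, {u ∈ U | ¬ b ⊆ u}.Finite

/-! ### Auxiliary lemmas -/

theorem bseq_aux_singleton {X : Type u} {B : Set (Set X)} (hB : IsBornology B) (x : X) :
    {x} ∈ B := by
  obtain ⟨hcov, hdown, -⟩ := hB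
  have hx : x ∈ ⋃₀ B := by rw [hcov]; trivial
  obtain ⟨b, hbB, hxb⟩ := hx
  exact hdown b hbB {x} (by simpa using hxb)

theorem bseq_aux_finite_mem {X : Type u} {B : Set (Set X)} (hB : IsBornology B) {s : Set X}
    (hfin : s.Finite) (hne : s.Nonempty) : s ∈ B := by
  classical
  have key : ∀ F : Finset X, F.Nonempty → (↑F : Set X) ∈ B := by
    intro F
    induction F using Finset.induction_on with
    | empty => intro h; simp at h
    | @insert a F ha ih =>
      intro _
      rcases F.eq_empty_or_nonempty with h | h
      · subst h; simpa using bseq_aux_singleton hB a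
      · have h1 : (↑F : Set X) ∈ B := ih h
        have h2 : ({a} : Set X) ∈ B := bseq_aux_singleton hB a
        have h3 := hB.2.2 {a} h2 (↑F) h1
        rw [Finset.coe_insert, Set.insert_eq]
        exact h3
  obtain ⟨F, rfl⟩ := hfin.exists_finset_coe
  exact key F (by simpa using hne)

theorem bseq_aux_not_subset {X : Type u} {B : Set (Set X)} (hB : IsBornology B)
    {T : Set (Set X)} (hT : T.Finite) (hne : T.Nonempty) (hnu : ∀ v ∈ T, v ≠ univ) :
    ∃ b ∈ B, ∀ v ∈ T, ¬ b ⊆ v := by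
  classical
  have hXne : Nonempty X := by
    obtain ⟨v, hv⟩ := hne
    obtain ⟨x, -⟩ := (Set.ne_univ_iff_exists_notMem v).mp (hnu v hv)
    exact ⟨x⟩
  set F : Set X → X := fun v => if h : ∃ x, x ∉ v then h.choose else Classical.arbitrary X
    with hFdef
  have hFv : ∀ v ∈ T, F v ∉ v := by
    intro v hv
    have h : ∃ x, x ∉ v := (Set.ne_univ_iff_exists_notMem v).mp (hnu v hv)
    simp only [hFdef, dif_pos h]
    exact h.choose_spec
  refine ⟨F '' T, bseq_aux_finite_mem hB (hT.image F) (hne.image F), ?_⟩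
  intro v hv hsub
  exact hFv v hv (hsub (Set.mem_image_of_mem F hv))

theorem bseq_aux_exists_notMem {S : Set ℕ} (h : S.Finite) : ∃ i, i ∉ S := by
  by_contra h'
  push_neg at h'
  have heq : S = Set.univ := Set.eq_univ_of_forall h'
  rw [heq] at h
  exact Set.infinite_univ h

theorem bseq_aux_strictMono {α : Type*} {g : ℕ → α} {M : ℕ → ℕ}
    (hspec : ∀ i, g (M (i + 1)) ∉ g '' Set.Iic (M i)) : StrictMono M := by
  apply strictMono_nat_of_lt_succ
  intro i
  by_contra h
  push_neg at h
  exact hspec i ⟨M (i + 1), Set.mem_Iic.mpr h, rfl⟩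

theorem bseq_aux_injective {α : Type*} {g : ℕ → α} {M : ℕ → ℕ} (hmono : Monotone M)
    (hspec : ∀ i, g (M (i + 1)) ∉ g '' Set.Iic (M i)) :
    Function.Injective fun i => g (M i) := by
  have key : ∀ j i, j < i → g (M j) ≠ g (M i) := by
    intro j i hji heq
    cases i with
    | zero => omega
    | succ i' => exact hspec i' ⟨M j, Set.mem_Iic.mpr (hmono (Nat.lt_succ_iff.mp hji)), heq⟩
  intro i j h
  by_contra hne
  rcases Nat.lt_or_ge i j with h1 | h1
  · exact key i j h1 h
  · have h2 : j < i := by omega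
    exact key j i h2 h.symm

theorem bseq_aux_badfin {X : Type u} {g : ℕ → Set X} {M : ℕ → ℕ}
    (hinj : Function.Injective fun i => g (M i)) {b : Set X}
    (hfin : {v ∈ Set.range g | ¬ b ⊆ v}.Finite) : {i | ¬ b ⊆ g (M i)}.Finite := by
  have h1 : {i | ¬ b ⊆ g (M i)} ⊆ (fun i => g (M i)) ⁻¹' {v ∈ Set.range g | ¬ b ⊆ v} :=
    fun i hi => ⟨⟨M i, rfl⟩, hi⟩
  exact (hfin.preimage hinj.injOn).subset h1

/-- The "cylinder" covers construction: from a sequence of `γ_B`-covers, extract injective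
enumerations `u n` and form `a n k = ⋂ i ≤ n, u i k`, whose ranges are again `γ_B`-covers. -/
theorem bseq_aux_cyl {X : Type u} [TopologicalSpace X] {B : Set (Set X)} (hB : IsBornology B)
    (U : ℕ → Set (Set X)) (hU : ∀ n, IsGammaBCover B (U n)) :
    ∃ u a : ℕ → ℕ → Set X,
      (∀ n, Function.Injective (u n)) ∧
      (∀ n k, u n k ∈ U n) ∧
      (∀ n k, u n k ≠ univ) ∧
      (∀ n k i, i ≤ n → a n k ⊆ u i k) ∧
      (∀ n, IsGammaBCover B (Set.range (a n))) := by
  have hu : ∀ n, ∃ g : ℕ → Set X, Function.Injective g ∧ ∀ k, g k ∈ U n := by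
    intro n
    have e : ℕ ↪ ↥(U n) := (hU n).1.natEmbedding
    refine ⟨fun k => ((e k : ↥(U n)) : Set X), ?_, fun k => (e k).2⟩
    intro k1 k2 h
    exact e.injective (Subtype.coe_injective h)
  choose u huinj humem using hu
  refine ⟨u, fun n k => ⋂ i ∈ Set.Iic n, u i k, huinj, humem,
    fun n k => ((hU n).2.1 _ (humem n k)).2, ?_, ?_⟩
  · intro n k i hi
    exact Set.biInter_subset_of_mem (Set.mem_Iic.mpr hi)
  · intro n
    show IsGammaBCover B (Set.range fun k => ⋂ i ∈ Set.Iic n, u i k)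
    have hopen : ∀ k, IsOpen (⋂ i ∈ Set.Iic n, u i k) :=
      fun k => (Set.finite_Iic n).isOpen_biInter (fun i _ => ((hU i).2.1 _ (humem i k)).1)
    have hne : ∀ k, (⋂ i ∈ Set.Iic n, u i k) ≠ univ := by
      intro k h
      have h1 : (⋂ i ∈ Set.Iic n, u i k) ⊆ u n k :=
        Set.biInter_subset_of_mem (Set.mem_Iic.mpr le_rfl)
      rw [h] at h1
      exact ((hU n).2.1 _ (humem n k)).2 (Set.univ_subset_iff.mp h1)
    have hbadk : ∀ b ∈ B, {k | ¬ b ⊆ ⋂ i ∈ Set.Iic n, u i k}.Finite := by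
      intro b hb
      have h1 : ∀ i, {k | ¬ b ⊆ u i k}.Finite := by
        intro i
        have h2 : {k | ¬ b ⊆ u i k} ⊆ (u i) ⁻¹' {v ∈ U i | ¬ b ⊆ v} :=
          fun k hk => ⟨humem i k, hk⟩
        exact (((hU i).2.2 b hb).preimage (huinj i).injOn).subset h2
      have h3 : {k | ¬ b ⊆ ⋂ i ∈ Set.Iic n, u i k} ⊆ ⋃ i ∈ Set.Iic n, {k | ¬ b ⊆ u i k} := by
        intro k hk
        by_contra h4
        simp only [Set.mem_iUnion, not_exists, Set.mem_setOf_eq, not_not] at h4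
        exact hk (Set.subset_iInter₂ fun i hi => h4 i hi)
      exact (Set.Finite.biUnion (Set.finite_Iic n) fun i _ => h1 i).subset h3
    refine ⟨?_, ?_, ?_⟩
    · by_contra hfin
      rw [Set.not_infinite] at hfin
      obtain ⟨b, hb, hnb⟩ := bseq_aux_not_subset hB hfin ⟨_, 0, rfl⟩
        (by rintro v ⟨k, rfl⟩; exact hne k)
      have h5 : {k | ¬ b ⊆ ⋂ i ∈ Set.Iic n, u i k} = Set.univ :=
        Set.eq_univ_of_forall fun k => hnb _ ⟨k, rfl⟩
      have h6 := hbadk b hb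
      rw [h5] at h6
      exact Set.infinite_univ h6
    · rintro v ⟨k, rfl⟩
      exact ⟨hopen k, hne k⟩
    · intro b hb
      refine ((hbadk b hb).image (fun k => ⋂ i ∈ Set.Iic n, u i k)).subset ?_
      rintro v ⟨⟨k, rfl⟩, hv⟩
      exact ⟨k, hv, rfl⟩

theorem stmt9 {X : Type u} [TopologicalSpace X] (B : Set (Set X)) (hB : IsBornology B)
    (hcb : HasClosedBase B) :
    (∀ U : ℕ → Set (Set X), (∀ n, IsGammaBCover B (U n)) →
      ∃ V : ℕ → Set X, (∀ n, V n ∈ U n) ∧ IsBSeq B (Set.range V)) ↔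
    (∀ U : ℕ → Set (Set X), (∀ n, IsGammaBCover B (U n)) →
      ∃ W : ℕ → Set (Set X), (∀ n, (W n).Infinite ∧ W n ⊆ U n) ∧
        IsBSeq B {s | ∃ n, s = ⋂₀ W n}) := by
  constructor
  · -- S1 implies ⋂∞
    intro hL U hU
    obtain ⟨u, a, huinj, humem, hune, hau, hA⟩ := bseq_aux_cyl hB U hU
    obtain ⟨P, hPmem, hPseq⟩ := hL (fun n => Set.range (a n)) hA
    obtain ⟨hPinf, -, hPbad⟩ := hPseq
    have hPmem' : ∀ m, ∃ kk, a m kk = P m := fun m => hPmem m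
    choose k hkm using hPmem'
    have hBx : ∀ x : X, {x} ∈ B := bseq_aux_singleton hB
    -- each "column" contributes only finitely many values of P
    have claimC : ∀ k0 : ℕ, (P '' {m | k m = k0}).Finite := by
      intro k0
      by_contra hc
      have hinf' : (P '' {m | k m = k0}).Infinite := hc
      have key : ∀ b ∈ B, b ⊆ u 0 k0 := by
        intro b hb
        obtain ⟨v, hv⟩ := (hinf'.diff (hPbad b hb)).nonempty
        obtain ⟨⟨m, hm, rfl⟩, hv2⟩ := hv
        have hgoodb : b ⊆ P m := by
          by_contra h
          exact hv2 ⟨⟨m, rfl⟩, h⟩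
        intro x hx
        have h1 : x ∈ a m (k m) := by rw [hkm m]; exact hgoodb hx
        have h2 : x ∈ u 0 (k m) := hau m (k m) 0 (Nat.zero_le m) h1
        rw [hm] at h2
        exact h2
      have huniv : u 0 k0 = univ :=
        Set.eq_univ_of_forall fun x => key {x} (hBx x) rfl
      exact hune 0 k0 huniv
    have claim' : ∀ T : Set (Set X), T.Finite → ∀ κ : Set ℕ, κ.Finite →
        ∃ m, P m ∉ T ∧ k m ∉ κ := by
      intro T hT κ hκ
      by_contra h
      push_neg at h
      have hsub : Set.range P ⊆ T ∪ ⋃ k0 ∈ κ, P '' {m | k m = k0} := by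
        rintro v ⟨m, rfl⟩
        by_cases hm : P m ∈ T
        · exact Or.inl hm
        · exact Or.inr (Set.mem_biUnion (h m hm) ⟨m, rfl, rfl⟩)
      exact hPinf ((hT.union (hκ.biUnion fun k0 _ => claimC k0)).subset hsub)
    have hfresh : ∀ m0 : ℕ, ∃ m, P m ∉ P '' Set.Iic m0 ∧ k m ∉ k '' Set.Iic m0 :=
      fun m0 => claim' _ ((Set.finite_Iic m0).image P) _ ((Set.finite_Iic m0).image k)
    choose f hf using hfresh
    obtain ⟨M, hM1, hM2⟩ : ∃ M : ℕ → ℕ,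
        (∀ i, P (M (i + 1)) ∉ P '' Set.Iic (M i)) ∧
        (∀ i, k (M (i + 1)) ∉ k '' Set.Iic (M i)) :=
      ⟨fun i => Nat.rec 0 (fun _ p => f p) i, fun i => (hf _).1, fun i => (hf _).2⟩
    have hMmonoS : StrictMono M := bseq_aux_strictMono (g := P) hM1
    have hiM : ∀ i, i ≤ M i := fun i => hMmonoS.le_apply
    have hPMinj : Function.Injective fun i => P (M i) :=
      bseq_aux_injective hMmonoS.monotone hM1
    have hkMinj : Function.Injective fun i => k (M i) :=
      bseq_aux_injective hMmonoS.monotone hM2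
    have hbadJ : ∀ b ∈ B, {j | ¬ b ⊆ P (M j)}.Finite :=
      fun b hb => bseq_aux_badfin hPMinj (hPbad b hb)
    refine ⟨fun n => (fun j => u n (k (M j))) '' Set.Ici n, ?_, ?_⟩
    · intro n
      constructor
      · refine (Set.Ici_infinite n).image ?_
        intro j1 _ j2 _ h
        exact hkMinj (huinj n h)
      · rintro w ⟨j, hj, rfl⟩
        exact humem n (k (M j))
    · have hgood : ∀ b n, (∀ j, n ≤ j → b ⊆ P (M j)) →
          b ⊆ ⋂₀ ((fun j => u n (k (M j))) '' Set.Ici n) := by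
        intro b n h
        apply Set.subset_sInter
        rintro w ⟨j, hj, rfl⟩
        intro x hx
        have h1 : x ∈ P (M j) := h j hj hx
        have h2 : x ∈ a (M j) (k (M j)) := by rw [hkm (M j)]; exact h1
        exact hau (M j) (k (M j)) n (le_trans hj (hiM j)) h2
      have hsubel : ∀ n, ⋂₀ ((fun j => u n (k (M j))) '' Set.Ici n) ⊆ u n (k (M n)) :=
        fun n => Set.sInter_subset_of_mem ⟨n, Set.mem_Ici.mpr le_rfl, rfl⟩
      have htne : ∀ n, ⋂₀ ((fun j => u n (k (M j))) '' Set.Ici n) ≠ univ := by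
        intro n h
        have h1 := hsubel n
        rw [h] at h1
        exact hune n (k (M n)) (Set.univ_subset_iff.mp h1)
      have hbadN : ∀ b ∈ B, {n | ¬ b ⊆ ⋂₀ ((fun j => u n (k (M j))) '' Set.Ici n)}.Finite := by
        intro b hb
        obtain ⟨C, hC⟩ := (hbadJ b hb).bddAbove
        refine (Set.finite_Iic C).subset ?_
        intro n hn
        rw [Set.mem_Iic]
        by_contra hnC
        push_neg at hnC
        refine hn (hgood b n ?_)
        intro j hj
        by_contra hbad'
        have hjC : j ≤ C := hC hbad'
        omega
      have hsetrw : {s | ∃ n, s = ⋂₀ ((fun j => u n (k (M j))) '' Set.Ici n)} =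
          Set.range (fun n => ⋂₀ ((fun j => u n (k (M j))) '' Set.Ici n)) := by
        ext v
        constructor <;> (rintro ⟨n, h⟩; exact ⟨n, h.symm⟩)
      rw [hsetrw]
      refine ⟨?_, ?_, ?_⟩
      · by_contra hfin
        rw [Set.not_infinite] at hfin
        obtain ⟨b, hb, hnb⟩ := bseq_aux_not_subset hB hfin ⟨_, 0, rfl⟩
          (by rintro v ⟨n, rfl⟩; exact htne n)
        obtain ⟨n, hn⟩ := bseq_aux_exists_notMem (hbadN b hb)
        simp only [Set.mem_setOf_eq, not_not] at hn
        exact hnb _ ⟨n, rfl⟩ hn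
      · apply Set.eq_univ_of_forall
        intro x
        obtain ⟨n, hn⟩ := bseq_aux_exists_notMem (hbadN {x} (hBx x))
        simp only [Set.mem_setOf_eq, not_not] at hn
        exact ⟨_, ⟨n, rfl⟩, hn rfl⟩
      · intro b hb
        refine ((hbadN b hb).image
          (fun n => ⋂₀ ((fun j => u n (k (M j))) '' Set.Ici n))).subset ?_
        rintro v ⟨⟨n, rfl⟩, hv⟩
        exact ⟨n, hv, rfl⟩
  · -- ⋂∞ implies S1
    intro hR U hU
    obtain ⟨u, a, huinj, humem, hune, hau, hA⟩ := bseq_aux_cyl hB U hU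
    obtain ⟨Z, hZ, hSeq⟩ := hR (fun n => Set.range (a n)) hA
    have hsetrw : {v | ∃ n, v = ⋂₀ Z n} = Set.range (fun n => ⋂₀ Z n) := by
      ext v
      constructor <;> (rintro ⟨n, h⟩; exact ⟨n, h.symm⟩)
    rw [hsetrw] at hSeq
    obtain ⟨hsinf, -, hsbad⟩ := hSeq
    have hBx : ∀ x : X, {x} ∈ B := bseq_aux_singleton hB
    have hfresh : ∀ m0 : ℕ, ∃ m, (⋂₀ Z m) ∉ (fun n => ⋂₀ Z n) '' Set.Iic m0 := by
      intro m0
      by_contra h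
      push_neg at h
      refine hsinf (Set.Finite.subset ((Set.finite_Iic m0).image (fun n => ⋂₀ Z n)) ?_)
      rintro v ⟨m, rfl⟩
      exact h m
    choose f hf using hfresh
    obtain ⟨N, hN1⟩ : ∃ N : ℕ → ℕ,
        ∀ i, (⋂₀ Z (N (i + 1))) ∉ (fun n => ⋂₀ Z n) '' Set.Iic (N i) :=
      ⟨fun i => Nat.rec 0 (fun _ p => f p) i, fun i => hf _⟩
    have hNmonoS : StrictMono N := bseq_aux_strictMono (g := fun n => ⋂₀ Z n) hN1
    have hiN : ∀ i, i ≤ N i := fun i => hNmonoS.le_apply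
    have hNinj : Function.Injective fun i => ⋂₀ Z (N i) :=
      bseq_aux_injective (g := fun n => ⋂₀ Z n) hNmonoS.monotone hN1
    have hbadI : ∀ b ∈ B, {i | ¬ b ⊆ ⋂₀ Z (N i)}.Finite :=
      fun b hb => bseq_aux_badfin (g := fun n => ⋂₀ Z n) hNinj (hsbad b hb)
    have hzk : ∀ i, ∃ kk, a (N i) kk ∈ Z (N i) := by
      intro i
      obtain ⟨z, hz⟩ := (hZ (N i)).1.nonempty
      obtain ⟨kk, hkk⟩ := (hZ (N i)).2 hz
      exact ⟨kk, by rw [hkk]; exact hz⟩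
    choose k hk using hzk
    have hgood : ∀ b i, b ⊆ ⋂₀ Z (N i) → b ⊆ u i (k i) := by
      intro b i hb x hx
      have h1 : x ∈ a (N i) (k i) := Set.sInter_subset_of_mem (hk i) (hb hx)
      exact hau (N i) (k i) i (hiN i) h1
    refine ⟨fun i => u i (k i), fun i => humem i (k i), ?_, ?_, ?_⟩
    · by_contra hfin
      rw [Set.not_infinite] at hfin
      obtain ⟨b, hb, hnb⟩ := bseq_aux_not_subset hB hfin ⟨_, 0, rfl⟩
        (by rintro v ⟨i, rfl⟩; exact hune i (k i))
      obtain ⟨i, hi⟩ := bseq_aux_exists_notMem (hbadI b hb)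
      simp only [Set.mem_setOf_eq, not_not] at hi
      exact hnb _ ⟨i, rfl⟩ (hgood b i hi)
    · apply Set.eq_univ_of_forall
      intro x
      obtain ⟨i, hi⟩ := bseq_aux_exists_notMem (hbadI {x} (hBx x))
      simp only [Set.mem_setOf_eq, not_not] at hi
      exact ⟨_, ⟨i, rfl⟩, hgood {x} i hi rfl⟩
    · intro b hb
      refine ((hbadI b hb).image (fun i => u i (k i))).subset ?_
      rintro v ⟨⟨i, rfl⟩, hv⟩
      refine ⟨i, ?_, rfl⟩
      intro h
      exact hv (hgood b i h)
end

section
/- Let 𝔅 be a bornology on a topological space X with a compact base 𝔅₀. If X satisfies S1(Γ_𝔅, Γ_𝔅), then every continuous image of X in the Baire space ω^ω is bounded with respect to eventual domination ≤*. -/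
open Set

universe u

open Function

/-!
If `ψ` is bounded we are done; otherwise some coordinate `n₀` of `ψ` is unbounded. For each `n`
the sets `Wₙ(m) = {x | ψ x i ≤ m for all i ≤ n + n₀}` increase with `m`, are open and proper, and
swallow every compact set (hence every member of `B`) from some `m` on: `m ↦ Wₙ(m)` is a
`γ_B`-cover. Selecting `Wₙ(mₙ)` from each by `S₁(Γ_B, Γ_B)` and passing to a strictly increasing
sequence `kⱼ` along which the selected sets are pairwise distinct, `g j = m (kⱼ)` bounds every
`ψ x` at all `j` with `x ∈ W_{kⱼ}(m (kⱼ))`, i.e. at all but finitely many `j`.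
-/

theorem IsCompact.bddAbove_pi {ι : Type*} {α : ι → Type*} [∀ i, LinearOrder (α i)]
    [∀ i, TopologicalSpace (α i)] [∀ i, ClosedIciTopology (α i)] [∀ i, Nonempty (α i)]
    {K : Set (∀ i, α i)} (hK : IsCompact K) : BddAbove K :=
  _root_.bddAbove_pi.2 fun i => (hK.image (continuous_apply i)).bddAbove

theorem Monotone.exists_forall_le_of_finite_range {ι α : Type*} [SemilatticeSup ι] [Nonempty ι]
    [Preorder α] {f : ι → α} (hf : Monotone f) (h : (range f).Finite) : ∃ i, ∀ j, f j ≤ f i := by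
  obtain ⟨_, ⟨i, rfl⟩, hmax⟩ := h.exists_maximal (range_nonempty f)
  exact ⟨i, fun j => (hf le_sup_left).trans (hmax ⟨_, rfl⟩ (hf le_sup_right))⟩

theorem exists_strictMono_injective_comp_of_infinite_range {α : Type*} {V : ℕ → α}
    (hV : (range V).Infinite) : ∃ k : ℕ → ℕ, StrictMono k ∧ Injective (V ∘ k) := by
  classical
  set S : Set ℕ := {i | ∀ j < i, V j ≠ V i}
  have hrange : range V ⊆ V '' S := by
    rintro _ ⟨i, rfl⟩
    have hex : ∃ j, V j = V i := ⟨i, rfl⟩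
    refine ⟨Nat.find hex, fun j hj => ?_, Nat.find_spec hex⟩
    rw [Nat.find_spec hex]
    exact Nat.find_min hex hj
  have hS : S.Infinite := fun hfin => hV ((hfin.image V).subset hrange)
  refine ⟨Nat.nth (· ∈ S), Nat.nth_strictMono hS, fun a b hab => ?_⟩
  by_contra hne
  rcases lt_or_gt_of_ne hne with h | h
  · exact Nat.nth_mem_of_infinite hS b _ (Nat.nth_strictMono hS h) hab
  · exact Nat.nth_mem_of_infinite hS a _ (Nat.nth_strictMono hS h) hab.symm

def baireBox (n m : ℕ) : Set (ℕ → ℕ) :=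
  (Iic n).pi fun _ => Iic m

theorem isOpen_baireBox (n m : ℕ) : IsOpen (baireBox n m) :=
  isOpen_set_pi (finite_Iic n) fun _ _ => isOpen_discrete _

theorem baireBox_mono {n n' m m' : ℕ} (hn : n' ≤ n) (hm : m ≤ m') :
    baireBox n m ⊆ baireBox n' m' :=
  pi_mono' (fun _ _ => Iic_subset_Iic.2 hm) (Iic_subset_Iic.2 hn)

theorem BddAbove.exists_subset_baireBox {K : Set (ℕ → ℕ)} (hK : BddAbove K) (n : ℕ) :
    ∃ m, K ⊆ baireBox n m := by
  obtain ⟨g, hg⟩ := hK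
  obtain ⟨m, hm⟩ := ((finite_Iic n).image g).bddAbove
  exact ⟨m, fun f hf i hi => (hg hf i).trans (hm (mem_image_of_mem g hi))⟩

theorem IsBornology.singleton_mem {X : Type*} {B : Set (Set X)} (hB : IsBornology B) (x : X) :
    {x} ∈ B := by
  obtain ⟨b, hb, hxb⟩ := hB.1.symm ▸ mem_univ x
  exact hB.2.1 b hb {x} (singleton_subset_iff.2 hxb)

section Bornology

variable {X : Type*} [TopologicalSpace X] {B : Set (Set X)}

theorem HasCompactBase.exists_subset_preimage_baireBox (hc : HasCompactBase B)
    {ψ : X → ℕ → ℕ} (hψ : Continuous ψ) {b : Set X} (hb : b ∈ B) (n : ℕ) :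
    ∃ m, b ⊆ ψ ⁻¹' baireBox n m := by
  obtain ⟨B0, -, hB0, hbase⟩ := hc
  obtain ⟨b0, hb0, hbb0⟩ := hbase b hb
  obtain ⟨m, hm⟩ := ((hB0 b0 hb0).image hψ).bddAbove_pi.exists_subset_baireBox n
  exact ⟨m, hbb0.trans (image_subset_iff.1 hm)⟩

theorem isGammaBCover_range_of_monotone (hB : ⋃₀ B = univ) {W : ℕ → Set X} (hW : Monotone W)
    (hopen : ∀ m, IsOpen (W m)) (hne : ∀ m, W m ≠ univ) (hsub : ∀ b ∈ B, ∃ m, b ⊆ W m) :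
    IsGammaBCover B (range W) := by
  refine ⟨fun hfin => ?_, ?_, fun b hb => ?_⟩
  · obtain ⟨i, hi⟩ := hW.exists_forall_le_of_finite_range hfin
    refine hne i (eq_univ_of_forall fun x => ?_)
    obtain ⟨b, hb, hxb⟩ := hB.symm ▸ mem_univ x
    obtain ⟨m, hm⟩ := hsub b hb
    exact hi m (hm hxb)
  · rintro _ ⟨m, rfl⟩
    exact ⟨hopen m, hne m⟩
  · obtain ⟨M, hM⟩ := hsub b hb
    refine ((finite_Iio M).image W).subset ?_
    rintro _ ⟨⟨m, rfl⟩, hbm⟩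
    exact ⟨m, lt_of_not_ge fun hMm => hbm (hM.trans (hW hMm)), rfl⟩

end Bornology

theorem exists_eventually_bound_of_selection {X : Type*} {ψ : X → ℕ → ℕ} {V : ℕ → Set X}
    {m : ℕ → ℕ} (hV : ∀ n, V n ⊆ ψ ⁻¹' baireBox n (m n)) (hinf : (range V).Infinite)
    (hγ : ∀ x, {u ∈ range V | x ∉ u}.Finite) :
    ∃ g : ℕ → ℕ, ∀ x, {n | ¬ ψ x n ≤ g n}.Finite := by
  obtain ⟨k, hk, hinj⟩ := exists_strictMono_injective_comp_of_infinite_range hinf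
  refine ⟨m ∘ k, fun x => ?_⟩
  have hbad : {j | ¬ ψ x j ≤ m (k j)} ⊆ (V ∘ k) ⁻¹' {u ∈ range V | x ∉ u} :=
    fun j hj => ⟨mem_range_self _, fun hx => hj (hV (k j) hx j (hk.id_le j))⟩
  exact ((hγ x).preimage hinj.injOn).subset hbad

theorem stmt13 {X : Type u} [TopologicalSpace X] (B : Set (Set X)) (hB : IsBornology B)
    (hc : HasCompactBase B) (h : S1 (IsGammaBCover B) (IsGammaBCover B))
    (ψ : X → (ℕ → ℕ)) (hψ : Continuous ψ) :
    ∃ g : ℕ → ℕ, ∀ f ∈ Set.range ψ, {n | ¬ f n ≤ g n}.Finite := by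
  by_cases hbdd : BddAbove (range ψ)
  · obtain ⟨g, hg⟩ := hbdd
    refine ⟨g, fun f hf => ?_⟩
    simp [hg hf _]
  obtain ⟨n₀, hn₀⟩ := not_forall.1 (mt bddAbove_pi.2 hbdd)
  have hunbdd : ∀ m, ∃ x, m < ψ x n₀ := fun m => by
    obtain ⟨_, ⟨_, ⟨x, rfl⟩, rfl⟩, hx⟩ := not_bddAbove_iff.1 hn₀ m
    exact ⟨x, hx⟩
  set W : ℕ → ℕ → Set X := fun n m => ψ ⁻¹' baireBox (n + n₀) m
  have hproper : ∀ n m, W n m ≠ univ := fun n m hW => by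
    obtain ⟨x, hx⟩ := hunbdd m
    exact hx.not_ge ((hW.symm ▸ mem_univ x : x ∈ W n m) n₀ (Nat.le_add_left n₀ n))
  have hγ : ∀ n, IsGammaBCover B (range (W n)) := fun n =>
    isGammaBCover_range_of_monotone hB.1 (fun _ _ hm => preimage_mono (baireBox_mono le_rfl hm))
      (fun m => (isOpen_baireBox _ m).preimage hψ) (hproper n)
      (fun b hb => hc.exists_subset_preimage_baireBox hψ hb (n + n₀))
  obtain ⟨V, hVW, hVinf, -, hVγ⟩ := h (fun n => range (W n)) hγ
  choose m hm using hVW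
  obtain ⟨g, hg⟩ := exists_eventually_bound_of_selection
    (fun n => (hm n).ge.trans (preimage_mono (baireBox_mono (Nat.le_add_right n n₀) le_rfl)))
    hVinf (fun x => by simpa only [singleton_subset_iff] using hVγ {x} (hB.singleton_mem x))
  exact ⟨g, by rintro _ ⟨x, rfl⟩; exact hg x⟩
end
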